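/- For n ≥ 1 indeterminates x_1,...,x_{n+1}: (x_1+...+x_{n+1})^n equals the sum over plane rooted trees T on n+1 vertices and permutations σ ∈ S_{n+1} assigning labels to vertices, of x_{σ(root)}^{deg(root)} / deg(root)! times the product over non-root vertices v of x_{σ(v)}^{deg(v)-1} / (deg(v)-1)!. -/

import Mathlib

/-- A plane rooted tree: a root together with a linearly ordered list of
plane rooted subtrees. -/
inductive PlaneTree : Type
  | node : List PlaneTree → PlaneTree

namespace PlaneTree

mutual
  /-- The list, in depth-first (preorder) traversal order, of the numbers of
  children of the vertices of a plane rooted tree.  Note that for the root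
  `deg(root)` equals its number of children, while for every other vertex
  `deg(v) - 1` equals its number of children. -/
  def childCounts : PlaneTree → List ℕ
    | node ts => ts.length :: childCountsList ts
  /-- Auxiliary: concatenated child-count lists of a forest. -/
  def childCountsList : List PlaneTree → List ℕ
    | [] => []
    | t :: ts => childCounts t ++ childCountsList ts
end

/-- The number of vertices of a plane rooted tree. -/
def size (T : PlaneTree) : ℕ := T.childCounts.length

end PlaneTree

open Finset MvPolynomial

/-!
Listing the numbers of children of the vertices of a plane tree in preorder identifies plane trees
on `n + 1` vertices with Łukasiewicz words: sequences of `n + 1` naturals with sum `n` whose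
prefixes of length `k ≤ n` have sum at least `k`. By the cycle lemma, every sequence of `n + 1`
naturals with sum `n` has exactly one rotation that is such a word, so counting every tree `n + 1`
times counts all these weak compositions. The summand, symmetrised over all labelings, only depends
on the multiset of child counts; hence `n + 1` times the right-hand side is
`∑_c ∑_σ ∏_i x_{σ i} ^ c_i / c_i!`, which the multinomial theorem evaluates to
`(n + 1)! / n! • (x₁ + ⋯ + x_{n+1}) ^ n`.
-/

namespace List

/-- Preorder child-count words of forests of `j` plane trees: reading the word left to right,
`(l.take k).sum + j - k` subtrees remain to be read, and this stays positive until the end. -/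
structure IsLukasiewicz (l : List ℕ) (j : ℕ) : Prop where
  sum_add : l.sum + j = l.length
  lt_sum_take_add : ∀ k < l.length, k < (l.take k).sum + j

namespace IsLukasiewicz

variable {l A A' B B' : List ℕ} {c j : ℕ}

theorem pos (h : l.IsLukasiewicz j) (hl : l ≠ []) : 0 < j := by
  simpa using h.lt_sum_take_add 0 (length_pos_iff.2 hl)

theorem eq_nil (h : l.IsLukasiewicz 0) : l = [] := by
  by_contra hl
  exact (h.pos hl).ne rfl

theorem cons_iff : (c :: l).IsLukasiewicz 1 ↔ l.IsLukasiewicz c := by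
  refine ⟨fun ⟨hsum, hlt⟩ => ⟨?_, fun k hk => ?_⟩, fun ⟨hsum, hlt⟩ => ⟨?_, fun k hk => ?_⟩⟩
  · simp only [sum_cons, length_cons] at hsum; omega
  · have := hlt (k + 1) (by simpa using hk)
    simp only [take_succ_cons, sum_cons] at this; omega
  · simp only [sum_cons, length_cons]; omega
  · rcases k with _ | k
    · simp
    · have := hlt k (by simpa using hk)
      simp only [take_succ_cons, sum_cons]; omega

theorem append (hA : A.IsLukasiewicz 1) (hB : B.IsLukasiewicz j) :
    (A ++ B).IsLukasiewicz (j + 1) := by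
  refine ⟨by simp only [sum_append, length_append]; have := hA.sum_add; have := hB.sum_add; omega,
    fun k hk => ?_⟩
  rw [length_append] at hk
  rcases lt_or_ge k A.length with hkA | hkA
  · rw [take_append_of_le_length hkA.le]
    have := hA.lt_sum_take_add k hkA; omega
  · rw [take_append, take_of_length_le hkA, sum_append]
    have := hA.sum_add
    have := hB.lt_sum_take_add (k - A.length) (by omega)
    omega

theorem length_le_of_append_eq (hA : A.IsLukasiewicz 1) (hA' : A'.IsLukasiewicz 1)
    (h : A ++ B = A' ++ B') : A'.length ≤ A.length := by
  by_contra! hlt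
  have hprefix : A'.take A.length = A := by
    simpa [take_append_of_le_length hlt.le] using (congrArg (take A.length) h).symm
  have := hA'.lt_sum_take_add A.length hlt
  rw [hprefix] at this
  have := hA.sum_add
  omega

theorem append_inj (hA : A.IsLukasiewicz 1) (hA' : A'.IsLukasiewicz 1)
    (h : A ++ B = A' ++ B') : A = A' ∧ B = B' :=
  List.append_inj h
    (le_antisymm (length_le_of_append_eq hA' hA h.symm) (length_le_of_append_eq hA hA' h))

/-- The first tree ends at the first position `k` with `(l.take k).sum < k`. -/
theorem exists_append (h : l.IsLukasiewicz (j + 1)) :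
    ∃ A B, l = A ++ B ∧ A.IsLukasiewicz 1 ∧ B.IsLukasiewicz j := by
  classical
  have hend : (l.take l.length).sum + 1 ≤ l.length := by
    rw [take_length]; have := h.sum_add; omega
  have hex : ∃ k, (l.take k).sum + 1 ≤ k := ⟨_, hend⟩
  set k := Nat.find hex
  have hk : (l.take k).sum + 1 ≤ k := Nat.find_spec hex
  have hkl : k ≤ l.length := Nat.find_min' hex hend
  have hbefore : ∀ i < k, i ≤ (l.take i).sum := fun i hi => by
    have := Nat.find_min hex hi; omega
  have hk0 : k ≠ 0 := by rintro hk0; simp [hk0] at hk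
  have hkeq : (l.take k).sum + 1 = k := by
    have hprev := hbefore (k - 1) (by omega)
    have hstep := sum_take_succ l (k - 1) (by omega)
    rw [Nat.sub_add_cancel (Nat.one_le_iff_ne_zero.2 hk0)] at hstep
    omega
  have hsplit := sum_take_add_sum_drop l k
  refine ⟨l.take k, l.drop k, (take_append_drop k l).symm, ⟨?_, fun i hi => ?_⟩,
    ⟨?_, fun i hi => ?_⟩⟩
  · rw [length_take, min_eq_left hkl, hkeq]
  · rw [length_take, min_eq_left hkl] at hi
    rw [take_take, min_eq_left hi.le]
    have := hbefore i hi; omega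
  · rw [length_drop]; have := h.sum_add; omega
  · rw [length_drop] at hi
    have := h.lt_sum_take_add (k + i) (by omega)
    rw [take_add, sum_append] at this
    omega

end IsLukasiewicz

variable {l : List ℕ} {r k : ℕ}

theorem sum_take_rotate_add (hr : r ≤ l.length) (hk : k ≤ l.length) :
    ((l.rotate r).take k).sum + ((l ++ l).take r).sum = ((l ++ l).take (r + k)).sum := by
  have hrot : (l.rotate r).take k = ((l ++ l).drop r).take k := by
    rw [rotate_eq_drop_append_take hr, drop_append_of_le_length hr, take_append, take_append,
      take_take, length_drop, min_eq_left (by omega)]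
  rw [hrot, take_add, sum_append, add_comm]

theorem sum_take_append_self_length_add (hk : k ≤ l.length) :
    ((l ++ l).take (l.length + k)).sum = l.sum + ((l ++ l).take k).sum := by
  rw [take_append, take_of_length_le (by omega), Nat.add_sub_cancel_left, sum_append,
    take_append_of_le_length hk]

theorem isLukasiewicz_rotate_iff (h : l.sum + 1 = l.length) (hr : r ≤ l.length) :
    (l.rotate r).IsLukasiewicz 1 ↔
      ∀ k < l.length, ((l ++ l).take r).sum + k ≤ ((l ++ l).take (r + k)).sum := by
  have hsum : (l.rotate r).sum + 1 = (l.rotate r).length := by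
    rw [(rotate_perm l r).sum_eq, length_rotate, h]
  refine ⟨fun hrot k hk => ?_, fun hP => ⟨hsum, fun k hk => ?_⟩⟩
  · have := hrot.lt_sum_take_add k (by rwa [length_rotate])
    have := sum_take_rotate_add hr hk.le
    omega
  · rw [length_rotate] at hk
    have := hP k hk
    have := sum_take_rotate_add hr hk.le
    omega

theorem IsLukasiewicz.eq_zero_of_rotate (hl : l.IsLukasiewicz 1) (hr : r < l.length)
    (hlr : (l.rotate r).IsLukasiewicz 1) : r = 0 := by
  have hsum := hl.sum_add
  have h0 := (isLukasiewicz_rotate_iff hsum (Nat.zero_le _)).1 (by rwa [rotate_zero]) r hr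
  by_contra hr0
  have hm := (isLukasiewicz_rotate_iff hsum hr.le).1 hlr (l.length - r) (by omega)
  rw [Nat.add_sub_cancel' hr.le, take_append_of_le_length le_rfl, take_length] at hm
  rw [take_zero, sum_nil, zero_add, take_append_of_le_length hr.le] at h0
  rw [take_append_of_le_length hr.le] at hm
  omega

theorem exists_rotate_isLukasiewicz (h : l.sum + 1 = l.length) :
    ∃ r < l.length, (l.rotate r).IsLukasiewicz 1 := by
  classical
  have hmin : ∃ r, r < l.length ∧
      ∀ j < l.length, ((l ++ l).take r).sum + j ≤ ((l ++ l).take j).sum + r := by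
    obtain ⟨r, hr, hr_min⟩ := (Finset.range l.length).exists_min_image
      (fun k => (((l ++ l).take k).sum : ℤ) - k) ⟨0, Finset.mem_range.2 (by omega)⟩
    exact ⟨r, Finset.mem_range.1 hr, fun j hj => by
      have := hr_min j (Finset.mem_range.2 hj); omega⟩
  obtain ⟨hr, hr_min⟩ := Nat.find_spec hmin
  set r := Nat.find hmin
  -- `r` is the first minimiser of `((l ++ l).take k).sum - k` on `[0, l.length)`
  have hfirst : ∀ j < r, ((l ++ l).take r).sum + j < ((l ++ l).take j).sum + r := by
    intro j hj
    have := Nat.find_min hmin hj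
    push Not at this
    obtain ⟨i, hi, hlt⟩ := this (hj.trans hr)
    have := hr_min i hi
    omega
  refine ⟨r, hr, (isLukasiewicz_rotate_iff h hr.le).2 fun k hk => ?_⟩
  rcases lt_or_ge (r + k) l.length with hlt | hge
  · have := hr_min _ hlt; omega
  · have hper := sum_take_append_self_length_add (l := l) (k := r + k - l.length) (by omega)
    rw [Nat.add_sub_cancel' hge] at hper
    have := hfirst (r + k - l.length) (by omega)
    omega

theorem sum_univ_getD {m : ℕ} (hl : l.length = m) :
    ∑ i : Fin m, l.getD i 0 = l.sum := by
  subst hl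
  simp only [getD_eq_getElem _ _ (Fin.is_lt _), Fin.sum_univ_getElem]

theorem getD_rotate {n : ℕ} (hl : l.length = n + 1) (r : Fin (n + 1)) (i : Fin (n + 1)) :
    (l.rotate r).getD i 0 = l.getD ↑(i + r) 0 := by
  rw [getD_eq_getElem _ _ (by rw [length_rotate, hl]; exact i.2),
    getD_eq_getElem _ _ (by rw [hl]; exact (i + r).2), getElem_rotate]
  simp only [Fin.val_add, hl]

end List

namespace PlaneTree

theorem childCounts_node (ts : List PlaneTree) :
    (node ts).childCounts = ts.length :: childCountsList ts := by
  rw [childCounts]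

theorem childCountsList_cons (t : PlaneTree) (ts : List PlaneTree) :
    childCountsList (t :: ts) = t.childCounts ++ childCountsList ts := by
  rw [childCountsList]

theorem childCounts_ne_nil (T : PlaneTree) : T.childCounts ≠ [] := by
  cases T; simp [childCounts_node]

theorem isLukasiewicz_childCounts (T : PlaneTree) : T.childCounts.IsLukasiewicz 1 := by
  refine PlaneTree.rec (motive_1 := fun T => T.childCounts.IsLukasiewicz 1)
    (motive_2 := fun ts => (childCountsList ts).IsLukasiewicz ts.length) ?_ ?_ ?_ T
  · intro ts h
    rwa [childCounts_node, List.IsLukasiewicz.cons_iff]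
  · exact ⟨rfl, fun k hk => by simp [childCountsList] at hk⟩
  · intro t ts ht hts
    rw [childCountsList_cons, List.length_cons]
    exact ht.append hts

theorem childCounts_injective : Function.Injective childCounts := by
  intro T₁ T₂ h
  refine PlaneTree.rec
    (motive_1 := fun T₁ => ∀ T₂, T₁.childCounts = T₂.childCounts → T₁ = T₂)
    (motive_2 := fun ts₁ => ∀ ts₂, childCountsList ts₁ = childCountsList ts₂ → ts₁ = ts₂)
    ?_ ?_ ?_ T₁ T₂ h
  · rintro ts₁ ih ⟨ts₂⟩ h
    rw [childCounts_node, childCounts_node, List.cons.injEq] at h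
    rw [ih ts₂ h.2]
  · rintro (_ | ⟨t₂, ts₂⟩) h
    · rfl
    · simp [childCountsList, childCounts_ne_nil] at h
  · rintro t₁ ts₁ ih₁ ih (_ | ⟨t₂, ts₂⟩) h
    · simp [childCountsList, childCounts_ne_nil] at h
    · rw [childCountsList_cons, childCountsList_cons] at h
      obtain ⟨ht, hts⟩ :=
        (isLukasiewicz_childCounts t₁).append_inj (isLukasiewicz_childCounts t₂) h
      rw [ih₁ t₂ ht, ih ts₂ hts]

theorem exists_childCountsList_eq {l : List ℕ} {j : ℕ} (h : l.IsLukasiewicz j) :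
    ∃ ts : List PlaneTree, ts.length = j ∧ childCountsList ts = l := by
  induction hl : l.length using Nat.strong_induction_on generalizing l j with
  | _ L ih =>
  subst hl
  cases j with
  | zero => exact ⟨[], rfl, by rw [h.eq_nil, childCountsList]⟩
  | succ j =>
    obtain ⟨A, B, rfl, hA, hB⟩ := h.exists_append
    obtain ⟨c, A, rfl⟩ : ∃ c A', A = c :: A' :=
      List.exists_cons_of_ne_nil fun hA0 => by simpa [hA0] using hA.sum_add
    obtain ⟨us, rfl, rfl⟩ := ih A.length (by simp) (List.IsLukasiewicz.cons_iff.1 hA) rfl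
    obtain ⟨vs, rfl, rfl⟩ := ih _ (by simp) hB rfl
    exact ⟨node us :: vs, rfl, by rw [childCountsList_cons, childCounts_node, List.cons_append]⟩

theorem exists_childCounts_eq {l : List ℕ} (h : l.IsLukasiewicz 1) :
    ∃ T : PlaneTree, T.childCounts = l := by
  obtain ⟨_ | ⟨T, _ | _⟩, hlen, rfl⟩ := exists_childCountsList_eq h <;> simp at hlen
  exact ⟨T, by rw [childCountsList_cons, childCountsList, List.append_nil]⟩


variable {n : ℕ}

abbrev LukasiewiczWord (n : ℕ) := {l : List ℕ // l.length = n + 1 ∧ l.IsLukasiewicz 1}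

abbrev WeakComposition (n : ℕ) := {l : List ℕ // l.length = n + 1 ∧ l.sum = n}

def toLukasiewiczWord (T : {T : PlaneTree // T.size = n + 1}) : LukasiewiczWord n :=
  ⟨T.1.childCounts, T.2, isLukasiewicz_childCounts T.1⟩

theorem toLukasiewiczWord_bijective : Function.Bijective (toLukasiewiczWord (n := n)) := by
  refine ⟨fun T₁ T₂ h => Subtype.ext (childCounts_injective (congrArg Subtype.val h)), ?_⟩
  rintro ⟨l, hlen, hl⟩
  obtain ⟨T, rfl⟩ := exists_childCounts_eq hl
  exact ⟨⟨T, hlen⟩, rfl⟩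

def rotateWord (p : LukasiewiczWord n × Fin (n + 1)) : WeakComposition n :=
  ⟨p.1.1.rotate p.2, by rw [List.length_rotate, p.1.2.1], by
    rw [(List.rotate_perm _ _).sum_eq]; have := p.1.2.1; have := p.1.2.2.sum_add; omega⟩

/-- The cycle lemma. -/
theorem rotateWord_bijective : Function.Bijective (rotateWord (n := n)) := by
  constructor
  · rintro ⟨⟨w₁, hlen₁, hw₁⟩, r₁⟩ ⟨⟨w₂, hlen₂, hw₂⟩, r₂⟩ h
    have h' : w₁.rotate r₁ = w₂.rotate r₂ := congrArg Subtype.val h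
    wlog hr : r₁ ≤ r₂ generalizing w₁ w₂ r₁ r₂
    · exact (this r₂ w₂ hlen₂ hw₂ r₁ w₁ hlen₁ hw₁ h.symm h'.symm (le_of_not_ge hr)).symm
    have hw : w₁ = w₂.rotate (r₂ - r₁) := by
      rw [← List.rotate_eq_rotate (n := r₁), h', List.rotate_rotate, Nat.sub_add_cancel hr]
    have hr₀ : (r₂ : ℕ) - r₁ = 0 :=
      hw₂.eq_zero_of_rotate (by rw [hlen₂]; omega) (hw ▸ hw₁)
    have hr' : r₁ = r₂ := Fin.ext (by omega)
    subst hr'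
    rw [hr₀, List.rotate_zero] at hw
    subst hw
    rfl
  · rintro ⟨l, hlen, hsum⟩
    obtain ⟨r, hr, hl⟩ := List.exists_rotate_isLukasiewicz (l := l) (by omega)
    rw [hlen] at hr
    refine ⟨(⟨l.rotate r, by rw [List.length_rotate, hlen], hl⟩,
      ⟨(n + 1 - r) % (n + 1), Nat.mod_lt _ n.succ_pos⟩), Subtype.ext ?_⟩
    have hmod := List.rotate_mod (l.rotate r) (n + 1 - r)
    rw [List.length_rotate, hlen] at hmod
    change (l.rotate r).rotate ((n + 1 - r) % (n + 1)) = l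
    rw [hmod, List.rotate_rotate, Nat.add_sub_cancel' hr.le, ← hlen, List.rotate_length]

def toPiAntidiag (l : WeakComposition n) : piAntidiag (univ : Finset (Fin (n + 1))) n :=
  ⟨fun i => l.1.getD i 0,
    mem_piAntidiag.2 ⟨(List.sum_univ_getD l.2.1).trans l.2.2, fun i _ => mem_univ i⟩⟩

theorem toPiAntidiag_bijective : Function.Bijective (toPiAntidiag (n := n)) := by
  constructor
  · rintro ⟨l₁, hlen₁, _⟩ ⟨l₂, hlen₂, _⟩ h
    refine Subtype.ext (List.ext_getElem (hlen₁.trans hlen₂.symm) fun i h₁ h₂ => ?_)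
    have : l₁.getD i 0 = l₂.getD i 0 := congrFun (congrArg Subtype.val h) ⟨i, hlen₁ ▸ h₁⟩
    rwa [List.getD_eq_getElem _ _ h₁, List.getD_eq_getElem _ _ h₂] at this
  · rintro ⟨c, hc⟩
    refine ⟨⟨List.ofFn c, List.length_ofFn, by rw [List.sum_ofFn]; exact (mem_piAntidiag.1 hc).1⟩,
      Subtype.ext (funext fun i => ?_)⟩
    show (List.ofFn c).getD i 0 = c i
    rw [List.getD_eq_getElem _ _ (by simp [i.2]), List.getElem_ofFn]

noncomputable instance : Fintype (WeakComposition n) :=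
  Fintype.ofInjective _ toPiAntidiag_bijective.injective

noncomputable instance : Fintype (LukasiewiczWord n) :=
  Fintype.ofInjective (fun w => rotateWord (w, 0)) fun _ _ h =>
    congrArg Prod.fst (rotateWord_bijective.injective h)

noncomputable instance : Fintype {T : PlaneTree // T.size = n + 1} :=
  Fintype.ofInjective _ toLukasiewiczWord_bijective.injective

theorem succ_nsmul_sum_childCounts {M : Type*} [AddCommMonoid M] (F : (Fin (n + 1) → ℕ) → M)
    (hF : ∀ c r, F (fun i => c (i + r)) = F c) :
    (n + 1) • ∑ T : {T : PlaneTree // T.size = n + 1}, F (fun i => T.1.childCounts.getD i 0) =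
      ∑ c ∈ piAntidiag univ n, F c := by
  calc (n + 1) • ∑ T : {T : PlaneTree // T.size = n + 1}, F (fun i => T.1.childCounts.getD i 0)
      = (n + 1) • ∑ w : LukasiewiczWord n, F (fun i => w.1.getD i 0) := by
        congr 1
        exact Fintype.sum_bijective _ toLukasiewiczWord_bijective _ _ fun _ => rfl
    _ = ∑ p : LukasiewiczWord n × Fin (n + 1), F (fun i => (p.1.1.rotate p.2).getD i 0) := by
        rw [Fintype.sum_prod_type, smul_sum]
        refine sum_congr rfl fun w _ => ?_
        simp only [List.getD_rotate w.2.1, hF fun i => w.1.getD i 0, sum_const, card_univ,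
          Fintype.card_fin]
    _ = ∑ l : WeakComposition n, F (fun i => l.1.getD i 0) :=
        Fintype.sum_bijective _ rotateWord_bijective _ _ fun _ => rfl
    _ = ∑ c ∈ piAntidiag univ n, F c := by
        rw [← Finset.sum_coe_sort (piAntidiag univ n)]
        exact Fintype.sum_bijective _ toPiAntidiag_bijective _ _ fun _ => rfl

end PlaneTree

theorem Finset.sum_pow_eq_factorial_nsmul_sum_piAntidiag {ι R : Type*} [DecidableEq ι]
    [CommSemiring R] [Algebra ℚ R] (s : Finset ι) (f : ι → R) (n : ℕ) :
    (∑ i ∈ s, f i) ^ n =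
      n.factorial • ∑ k ∈ s.piAntidiag n, ∏ i ∈ s, ((k i).factorial : ℚ)⁻¹ • f i ^ k i := by
  rw [sum_pow_eq_sum_piAntidiag, smul_sum]
  refine sum_congr rfl fun k hk => ?_
  have hspec := Nat.multinomial_spec s k
  rw [(mem_piAntidiag.1 hk).1] at hspec
  have hmultinomial :
      (Nat.multinomial s k : ℚ) = n.factorial * ∏ i ∈ s, ((k i).factorial : ℚ)⁻¹ := by
    rw [← hspec, Nat.cast_mul, Nat.cast_prod, prod_inv_distrib, mul_comm, inv_mul_cancel_left₀
      (prod_ne_zero_iff.2 fun i _ => Nat.cast_ne_zero.2 (Nat.factorial_ne_zero _))]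
  rw [prod_smul, ← Nat.cast_smul_eq_nsmul ℚ, smul_smul, ← hmultinomial, Nat.cast_smul_eq_nsmul,
    nsmul_eq_mul]

section LabelingWeight

variable {ι : Type*} [Fintype ι] [DecidableEq ι]

noncomputable def labelingWeight (c : ι → ℕ) : MvPolynomial ι ℚ :=
  ∑ σ : Equiv.Perm ι, ∏ i, C (((c i).factorial : ℚ)⁻¹) * X (σ i) ^ c i

theorem labelingWeight_comp_perm (c : ι → ℕ) (π : Equiv.Perm ι) :
    labelingWeight (c ∘ π) = labelingWeight c := by
  refine Fintype.sum_equiv (Equiv.mulRight π⁻¹) _ _ fun σ => ?_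
  refine Eq.trans ?_ (Equiv.prod_comp π _)
  simp [Equiv.Perm.mul_apply]

theorem factorial_nsmul_sum_labelingWeight (n : ℕ) :
    n.factorial • ∑ c ∈ piAntidiag univ n, labelingWeight c =
      (Fintype.card ι).factorial • (∑ i, X i : MvPolynomial ι ℚ) ^ n := by
  have hσ : ∀ σ : Equiv.Perm ι, n.factorial • ∑ c ∈ piAntidiag univ n,
      ∏ i, C (((c i).factorial : ℚ)⁻¹) * X (σ i) ^ c i = (∑ i, X i : MvPolynomial ι ℚ) ^ n := by
    intro σ
    simp_rw [C_mul']
    rw [← sum_pow_eq_factorial_nsmul_sum_piAntidiag, Equiv.sum_comp σ X]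
  simp only [labelingWeight]
  rw [sum_comm, smul_sum, sum_congr rfl fun σ _ => hσ σ, sum_const, card_univ, Fintype.card_perm]

end LabelingWeight

/- Vertices are identified with their preorder positions `0, …, n`, the root being `0`; the
exponent of each vertex is its number of children, `deg(root)` for the root and `deg(v) - 1`
otherwise. -/
theorem plane_tree_cayley (n : ℕ) (hn : 1 ≤ n) :
    (∑ i : Fin (n + 1), X i : MvPolynomial (Fin (n + 1)) ℚ) ^ n =
      ∑ᶠ T : {T : PlaneTree // T.size = n + 1},
        ∑ σ : Equiv.Perm (Fin (n + 1)),
          ∏ i : Fin (n + 1),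
            C (((T.1.childCounts.getD (i : ℕ) 0).factorial : ℚ)⁻¹) *
              X (σ i) ^ T.1.childCounts.getD (i : ℕ) 0 := by
  rw [finsum_eq_sum_of_fintype]
  apply smul_right_injective _ (Nat.factorial_ne_zero (n + 1))
  calc (n + 1).factorial • (∑ i : Fin (n + 1), X i : MvPolynomial (Fin (n + 1)) ℚ) ^ n
      = n.factorial • ∑ c ∈ piAntidiag univ n, labelingWeight c := by
        rw [factorial_nsmul_sum_labelingWeight, Fintype.card_fin]
    _ = n.factorial • (n + 1) • ∑ T : {T : PlaneTree // T.size = n + 1},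
          labelingWeight fun i : Fin (n + 1) => T.1.childCounts.getD i 0 := by
        rw [PlaneTree.succ_nsmul_sum_childCounts labelingWeight fun c r =>
          labelingWeight_comp_perm c (Equiv.addRight r)]
    _ = _ := by rw [smul_smul, mul_comm, ← Nat.factorial_succ]; rfl
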